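/- arXiv:2504.12448 — 5 statements merged into one kernel-verified Lean document; each statement's English description precedes it below -/
import Mathlib

section
/- Let S ⊆ [0,∞) be Lebesgue measurable and M > 0 with lim_{T→∞} vol(S∩[0,T])/T = M. Let (t_i)_{i∈ℕ} be a strictly increasing sequence of nonnegative reals tending to ∞, and let c ≥ 0 be such that vol(S∩[t_i, t_{i+1}]) ≤ c for all i. Then for every ε > 0 there exists N ∈ ℕ such that M·(t_{i+1} − t_i) ≤ 2ε·t_{i+1} + c for all i ≥ N. -/
open Filter MeasureTheory

/-- Let `S ⊆ [0,∞)` be Lebesgue measurable and `M > 0` with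
`lim_{T→∞} vol(S∩[0,T])/T = M`. Let `(t_i)` be a strictly increasing sequence of
nonnegative reals tending to `∞`, and `c ≥ 0` with `vol(S∩[t_i, t_{i+1}]) ≤ c` for all `i`.
Then for every `ε > 0` there is `N` with `M·(t_{i+1} − t_i) ≤ 2ε·t_{i+1} + c` for `i ≥ N`. -/
theorem density_gap_bound
    (S : Set ℝ) (M c : ℝ) (t : ℕ → ℝ)
    (hS_meas : MeasurableSet S) (hS_sub : S ⊆ Set.Ici 0)
    (hM : 0 < M)
    (hdensity : Tendsto (fun T : ℝ => (volume (S ∩ Set.Icc 0 T)).toReal / T)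
      atTop (nhds M))
    (ht_mono : StrictMono t) (ht_nonneg : ∀ i, 0 ≤ t i)
    (ht_top : Tendsto t atTop atTop)
    (hc : 0 ≤ c)
    (hgap : ∀ i : ℕ, (volume (S ∩ Set.Icc (t i) (t (i + 1)))).toReal ≤ c) :
    ∀ ε : ℝ, 0 < ε → ∃ N : ℕ, ∀ i : ℕ, N ≤ i →
      M * (t (i + 1) - t i) ≤ 2 * ε * t (i + 1) + c := by
  intro ε hε
  set f : ℝ → ℝ := fun T => (volume (S ∩ Set.Icc 0 T)).toReal with hf
  have hfin : ∀ a b : ℝ, volume (S ∩ Set.Icc a b) ≠ ⊤ := by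
    intro a b
    exact ((measure_mono Set.inter_subset_right).trans_lt measure_Icc_lt_top).ne
  -- eventually the density quotient is ε-close to M
  have h1 : ∀ᶠ T in atTop, |f T / T - M| < ε := by
    have := Metric.tendsto_nhds.mp hdensity ε hε
    filter_upwards [this] with T hT
    simpa [Real.dist_eq] using hT
  obtain ⟨T₀, hT₀⟩ := eventually_atTop.mp h1
  obtain ⟨N, hN⟩ := eventually_atTop.mp (ht_top.eventually (eventually_ge_atTop (max T₀ 1)))
  refine ⟨N, fun i hi => ?_⟩
  have ha : max T₀ 1 ≤ t i := hN i hi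
  have hb : max T₀ 1 ≤ t (i + 1) := hN (i + 1) (hi.trans (Nat.le_succ i))
  have hapos : (0:ℝ) < t i := lt_of_lt_of_le (by positivity) ((le_max_right T₀ 1).trans ha)
  have hbpos : (0:ℝ) < t (i + 1) := lt_of_lt_of_le (by positivity) ((le_max_right T₀ 1).trans hb)
  have hab : t i ≤ t (i + 1) := (ht_mono (Nat.lt_succ_self i)).le
  -- bound on f (t (i+1)) - f (t i)
  have hsplit : f (t (i + 1)) ≤ f (t i) + c := by
    have hsub : S ∩ Set.Icc 0 (t (i + 1)) ⊆
        (S ∩ Set.Icc 0 (t i)) ∪ (S ∩ Set.Icc (t i) (t (i + 1))) := by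
      rintro x ⟨hxS, hx0, hxb⟩
      rcases le_total x (t i) with h | h
      · exact Or.inl ⟨hxS, hx0, h⟩
      · exact Or.inr ⟨hxS, h, hxb⟩
    have hle : volume (S ∩ Set.Icc 0 (t (i + 1))) ≤
        volume (S ∩ Set.Icc 0 (t i)) + volume (S ∩ Set.Icc (t i) (t (i + 1))) :=
      (measure_mono hsub).trans (measure_union_le _ _)
    have := ENNReal.toReal_mono (by
      simp [ENNReal.add_ne_top, hfin]) hle
    rw [ENNReal.toReal_add (hfin _ _) (hfin _ _)] at this
    exact this.trans (by linarith [hgap i])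
  -- density estimates
  have hfa : f (t i) < M * t i + ε * t i := by
    have h := abs_lt.mp (hT₀ (t i) ((le_max_left T₀ 1).trans ha))
    have : f (t i) / t i < M + ε := by linarith [h.2]
    calc f (t i) = (f (t i) / t i) * t i := by field_simp
    _ < (M + ε) * t i := mul_lt_mul_of_pos_right this hapos
    _ = M * t i + ε * t i := by ring
  have hfb : M * t (i + 1) - ε * t (i + 1) < f (t (i + 1)) := by
    have h := abs_lt.mp (hT₀ (t (i + 1)) ((le_max_left T₀ 1).trans hb))
    have : M - ε < f (t (i + 1)) / t (i + 1) := by linarith [h.1]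
    calc M * t (i + 1) - ε * t (i + 1) = (M - ε) * t (i + 1) := by ring
    _ < (f (t (i + 1)) / t (i + 1)) * t (i + 1) := mul_lt_mul_of_pos_right this hbpos
    _ = f (t (i + 1)) := by field_simp
  have hεab : ε * t i ≤ ε * t (i + 1) := by nlinarith
  nlinarith [hsplit, hfa, hfb]
end

section
/- Let (X,d) be a metric space, γ : [0,∞) → X a geodesic ray, r > 0, and S ⊆ [0,∞) Lebesgue measurable with lim_{T→∞} vol(S∩[0,T])/T = M for some M > 0. Let (t_i)_{i∈ℕ} be a strictly increasing sequence of nonnegative reals tending to ∞ such that vol(S∩[t_i, t_{i+1}]) ≤ 2r for all i, and let (y_i)_{i∈ℕ} be points of X with d(y_i, γ(t_i)) ≤ r for all i. Then there exists a nondecreasing sublinear function η₀ : [0,∞) → [0,∞) such that d(y_i, y_{i+1}) ≤ η₀(d(y_0, y_{i+1})) for all i. -/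
open Filter MeasureTheory

/-!
Write `V T = vol (S ∩ [0, T])`. The gap hypothesis gives `V (t (i+1)) ≤ V (t i) + 2r`, while the
density hypothesis says `V T = M T + o(T)`; hence `M (t (i+1) - t i) ≤ 2r + o(t (i+1))`, i.e. the
steps of `t` are `o(t (i+1))`. As `y i` stays within `r` of `γ (t i)`, the step `d(y i, y (i+1))` is
at most `t (i+1) - t i + 2r`, while `d(y 0, y (i+1)) ≥ t (i+1) - t 0 - 2r`, so
`d(y i, y (i+1)) = o(d(y 0, y (i+1)))`. Any such little-o relation is dominated by the monotone
envelope `η s = sup ({0} ∪ {d(y i, y (i+1)) | d(y 0, y (i+1)) ≤ s})`, which is sublinear.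
-/

open Asymptotics Set Topology

theorem exists_le_add_mul_norm_of_isLittleO {ι : Type*} {f D : ι → ℝ}
    (h : f =o[cofinite] D) {ε : ℝ} (hε : 0 < ε) :
    ∃ C, 0 ≤ C ∧ ∀ i, f i ≤ C + ε * ‖D i‖ := by
  have hexc : {i | ¬ ‖f i‖ ≤ ε * ‖D i‖}.Finite := eventually_cofinite.1 (h.bound hε)
  obtain ⟨C, hC⟩ := (hexc.image f).bddAbove
  refine ⟨max C 0, le_max_right _ _, fun i => ?_⟩
  have hεD : 0 ≤ ε * ‖D i‖ := by positivity
  by_cases hi : ‖f i‖ ≤ ε * ‖D i‖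
  · linarith [le_abs_self (f i), le_max_right C 0, Real.norm_eq_abs (f i)]
  · linarith [hC (mem_image_of_mem f hi), le_max_left C 0]

theorem exists_monotone_sublinear_le_of_isLittleO {ι : Type*} {f D : ι → ℝ} (hD : ∀ i, 0 ≤ D i)
    (h : f =o[cofinite] D) :
    ∃ η : ℝ → ℝ, MonotoneOn η (Ici 0) ∧ (∀ s, 0 ≤ s → 0 ≤ η s) ∧
      Tendsto (fun s => η s / s) atTop (𝓝 0) ∧ ∀ i, f i ≤ η (D i) := by
  set A : ℝ → Set ℝ := fun s => insert 0 (f '' {i | D i ≤ s})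
  have hA : ∀ ε, 0 < ε → ∃ C, 0 ≤ C ∧ ∀ s, 0 ≤ s → ∀ x ∈ A s, x ≤ C + ε * s := by
    intro ε hε
    obtain ⟨C, hC0, hC⟩ := exists_le_add_mul_norm_of_isLittleO h hε
    refine ⟨C, hC0, fun s hs x hx => ?_⟩
    rcases hx with rfl | ⟨i, hi, rfl⟩
    · positivity
    · have := hC i
      rw [Real.norm_of_nonneg (hD i)] at this
      linarith [mul_le_mul_of_nonneg_left (show D i ≤ s from hi) hε.le]
  have hbdd : ∀ s, 0 ≤ s → BddAbove (A s) := fun s hs => by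
    obtain ⟨C, -, hC⟩ := hA 1 one_pos
    exact ⟨C + 1 * s, hC s hs⟩
  have hnonneg : ∀ s, 0 ≤ s → 0 ≤ sSup (A s) := fun s hs =>
    le_csSup (hbdd s hs) (mem_insert 0 _)
  refine ⟨fun s => sSup (A s), fun s₁ _ s₂ hs₂ h₁₂ => ?_, hnonneg, ?_, fun i => ?_⟩
  · exact csSup_le_csSup (hbdd s₂ hs₂) (insert_nonempty _ _)
      (insert_subset_insert (image_mono fun i hi => le_trans hi h₁₂))
  · refine tendsto_order.2 ⟨fun a ha => ?_, fun a ha => ?_⟩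
    · filter_upwards [eventually_gt_atTop 0] with s hs
      exact ha.trans_le (div_nonneg (hnonneg s hs.le) hs.le)
    · obtain ⟨C, -, hC⟩ := hA (a / 2) (half_pos ha)
      have hlim : Tendsto (fun s => C / s + a / 2) atTop (𝓝 (0 + a / 2)) :=
        (tendsto_const_nhds.div_atTop tendsto_id).add tendsto_const_nhds
      filter_upwards [hlim.eventually_lt_const (by linarith : 0 + a / 2 < a), eventually_gt_atTop 0]
        with s hlt hs
      calc sSup (A s) / s ≤ (C + a / 2 * s) / s :=
            div_le_div_of_nonneg_right (csSup_le (insert_nonempty _ _) (hC s hs.le)) hs.le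
        _ = C / s + a / 2 := by field_simp
        _ < a := hlt
  · exact le_csSup (hbdd (D i) (hD i)) (mem_insert_of_mem _ ⟨i, le_refl (D i), rfl⟩)

theorem isLittleO_sub_mul_of_tendsto_div {V : ℝ → ℝ} {M : ℝ}
    (hV : Tendsto (fun T => V T / T) atTop (𝓝 M)) :
    (fun T => V T - M * T) =o[atTop] id := by
  have hne : ∀ᶠ T in atTop, id T = 0 → V T - M * T = 0 := by
    filter_upwards [eventually_ne_atTop 0] with T hT h0
    exact absurd h0 hT
  refine (isLittleO_iff_tendsto' hne).2 ?_
  have hV' : Tendsto (fun T => V T / T - M) atTop (𝓝 0) := by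
    simpa using hV.sub_const M
  refine hV'.congr' ?_
  filter_upwards [eventually_ne_atTop 0] with T hT
  simp only [id]
  field_simp

theorem measureReal_inter_Icc_le_add {μ : Measure ℝ} [IsLocallyFiniteMeasure μ] (S : Set ℝ)
    (a b c : ℝ) : μ.real (S ∩ Icc a c) ≤ μ.real (S ∩ Icc a b) + μ.real (S ∩ Icc b c) := by
  refine le_trans (measureReal_mono ?_ ?_) (measureReal_union_le _ _)
  · rintro x ⟨hxS, hax, hxc⟩
    rcases le_total x b with hxb | hbx
    · exact Or.inl ⟨hxS, hax, hxb⟩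
    · exact Or.inr ⟨hxS, hbx, hxc⟩
  · have hfin : ∀ u v, μ (S ∩ Icc u v) ≠ ⊤ := fun u v =>
      ((measure_mono inter_subset_right).trans_lt measure_Icc_lt_top).ne
    exact measure_union_ne_top (hfin a b) (hfin b c)

theorem isLittleO_succ_sub_of_tendsto_div {V : ℝ → ℝ} {t : ℕ → ℝ} {M c : ℝ} (hM : 0 < M)
    (hV : Tendsto (fun T => V T / T) atTop (𝓝 M)) (ht : Monotone t)
    (ht_top : Tendsto t atTop atTop) (hstep : ∀ i, V (t (i + 1)) ≤ V (t i) + c) :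
    (fun i => t (i + 1) - t i) =o[atTop] fun i => t (i + 1) := by
  set E : ℝ → ℝ := fun T => V T - M * T
  have hE : E =o[atTop] id := isLittleO_sub_mul_of_tendsto_div hV
  have ht_succ : Tendsto (fun i => t (i + 1)) atTop atTop :=
    ht_top.comp (tendsto_add_atTop_nat 1)
  have ht_le_succ : t =O[atTop] fun i => t (i + 1) := by
    refine IsBigO.of_bound 1 ?_
    filter_upwards [ht_top.eventually_ge_atTop 0] with i hi
    rw [one_mul, Real.norm_of_nonneg hi, Real.norm_of_nonneg (hi.trans (ht i.le_succ))]
    exact ht i.le_succ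
  have h_err : (fun i => c - E (t (i + 1)) + E (t i)) =o[atTop] fun i => t (i + 1) :=
    ((isLittleO_const_left.2 (Or.inr (tendsto_norm_atTop_atTop.comp ht_succ))).sub
      (hE.comp_tendsto ht_succ)).add ((hE.comp_tendsto ht_top).trans_isBigO ht_le_succ)
  refine (IsBigO.of_bound M⁻¹ (Eventually.of_forall fun i => ?_)).trans_isLittleO h_err
  have h_step : M * (t (i + 1) - t i) ≤ c - E (t (i + 1)) + E (t i) := by
    simp only [E]
    linarith [hstep i]
  rw [Real.norm_of_nonneg (sub_nonneg.2 (ht i.le_succ)), le_inv_mul_iff₀ hM]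
  exact h_step.trans (le_abs_self _)

theorem abs_dist_sub_dist_le_of_dist_le {X : Type*} [PseudoMetricSpace X] {a b p q : X} {r : ℝ}
    (ha : dist a p ≤ r) (hb : dist b q ≤ r) : |dist a b - dist p q| ≤ 2 * r := by
  have := dist_dist_dist_le a b p q
  rw [Real.dist_eq] at this
  linarith

theorem isLittleO_dist_succ_of_isLittleO_sub {X : Type*} [PseudoMetricSpace X] {γ : ℝ → X}
    {t : ℕ → ℝ} {y : ℕ → X} {r : ℝ}
    (hγ : ∀ s u, 0 ≤ s → 0 ≤ u → dist (γ s) (γ u) = |s - u|) (ht_nonneg : ∀ i, 0 ≤ t i)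
    (ht : Monotone t) (ht_top : Tendsto t atTop atTop) (hy : ∀ i, dist (y i) (γ (t i)) ≤ r)
    (hgap : (fun i => t (i + 1) - t i) =o[atTop] fun i => t (i + 1)) :
    (fun i => dist (y i) (y (i + 1))) =o[atTop] fun i => dist (y 0) (y (i + 1)) := by
  have hnear : ∀ i j, i ≤ j → |dist (y i) (y j) - (t j - t i)| ≤ 2 * r := fun i j hij => by
    rw [← abs_of_nonneg (sub_nonneg.2 (ht hij)), abs_sub_comm (t j),
      ← hγ _ _ (ht_nonneg i) (ht_nonneg j)]
    exact abs_dist_sub_dist_le_of_dist_le (hy i) (hy j)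
  have hD_lower : ∀ i, t (i + 1) ≤ dist (y 0) (y (i + 1)) + (t 0 + 2 * r) := fun i => by
    linarith [(abs_le.1 (hnear 0 (i + 1) (Nat.zero_le _))).1]
  have ht_succ : Tendsto (fun i => t (i + 1)) atTop atTop :=
    ht_top.comp (tendsto_add_atTop_nat 1)
  have hD_top : Tendsto (fun i => dist (y 0) (y (i + 1))) atTop atTop :=
    tendsto_atTop_mono (fun i => by linarith [hD_lower i])
      (tendsto_atTop_add_const_right _ (-(t 0 + 2 * r)) ht_succ)
  have ht_D : (fun i => t (i + 1)) =O[atTop] fun i => dist (y 0) (y (i + 1)) := by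
    refine IsBigO.of_bound 2 ?_
    filter_upwards [hD_top.eventually_ge_atTop (t 0 + 2 * r)] with i hi
    rw [Real.norm_of_nonneg (ht_nonneg _), Real.norm_of_nonneg dist_nonneg]
    linarith [hD_lower i]
  have h_bound : (fun i => t (i + 1) - t i + 2 * r) =o[atTop] fun i => dist (y 0) (y (i + 1)) :=
    (hgap.trans_isBigO ht_D).add
      (isLittleO_const_left.2 (Or.inr (tendsto_norm_atTop_atTop.comp hD_top)))
  refine (isBigO_of_le _ fun i => ?_).trans_isLittleO h_bound
  rw [Real.norm_of_nonneg dist_nonneg, Real.norm_eq_abs]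
  linarith [(abs_le.1 (hnear i (i + 1) i.le_succ)).2, le_abs_self (t (i + 1) - t i + 2 * r)]

theorem sublinear_consecutive_gaps_of_density_general
    {X : Type*} [MetricSpace X] (γ : ℝ → X) (r M : ℝ) (S : Set ℝ)
    (t : ℕ → ℝ) (y : ℕ → X)
    (hγ : ∀ s u : ℝ, 0 ≤ s → 0 ≤ u → dist (γ s) (γ u) = |s - u|)
    (hM : 0 < M)
    (hdensity : Tendsto (fun T : ℝ => (volume (S ∩ Set.Icc 0 T)).toReal / T)
      atTop (nhds M))
    (ht_mono : StrictMono t) (ht_nonneg : ∀ i, 0 ≤ t i)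
    (ht_top : Tendsto t atTop atTop)
    (hgap : ∀ i : ℕ, (volume (S ∩ Set.Icc (t i) (t (i + 1)))).toReal ≤ 2 * r)
    (hy : ∀ i : ℕ, dist (y i) (γ (t i)) ≤ r) :
    ∃ η₀ : ℝ → ℝ, MonotoneOn η₀ (Set.Ici 0) ∧ (∀ s : ℝ, 0 ≤ s → 0 ≤ η₀ s) ∧
      Tendsto (fun s : ℝ => η₀ s / s) atTop (nhds 0) ∧
      ∀ i : ℕ, dist (y i) (y (i + 1)) ≤ η₀ (dist (y 0) (y (i + 1))) := by
  have hstep : ∀ i,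
      volume.real (S ∩ Icc 0 (t (i + 1))) ≤ volume.real (S ∩ Icc 0 (t i)) + 2 * r := fun i =>
    (measureReal_inter_Icc_le_add S 0 (t i) (t (i + 1))).trans (add_le_add_right (hgap i) _)
  have h_gaps := isLittleO_succ_sub_of_tendsto_div hM hdensity ht_mono.monotone ht_top hstep
  have h_dist := isLittleO_dist_succ_of_isLittleO_sub hγ ht_nonneg ht_mono.monotone ht_top hy h_gaps
  rw [← Nat.cofinite_eq_atTop] at h_dist
  exact exists_monotone_sublinear_le_of_isLittleO (fun _ => dist_nonneg) h_dist

/-- Let `(X,d)` be a metric space, `γ : [0,∞) → X` a geodesic ray,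
`r > 0`, and `S ⊆ [0,∞)` Lebesgue measurable with density `M > 0`. Let `(t_i)` be a
strictly increasing sequence of nonnegative reals tending to `∞` with
`vol(S∩[t_i, t_{i+1}]) ≤ 2r` for all `i`, and `(y_i)` points of `X` with
`d(y_i, γ(t_i)) ≤ r`. Then there is a nondecreasing sublinear `η₀ : [0,∞) → [0,∞)` with
`d(y_i, y_{i+1}) ≤ η₀(d(y_0, y_{i+1}))` for all `i`. -/
theorem sublinear_consecutive_gaps_of_density
    {X : Type*} [MetricSpace X] (γ : ℝ → X) (r M : ℝ) (S : Set ℝ)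
    (t : ℕ → ℝ) (y : ℕ → X)
    (hγ : ∀ s u : ℝ, 0 ≤ s → 0 ≤ u → dist (γ s) (γ u) = |s - u|)
    (hr : 0 < r)
    (hS_meas : MeasurableSet S) (hS_sub : S ⊆ Set.Ici 0)
    (hM : 0 < M)
    (hdensity : Tendsto (fun T : ℝ => (volume (S ∩ Set.Icc 0 T)).toReal / T)
      atTop (nhds M))
    (ht_mono : StrictMono t) (ht_nonneg : ∀ i, 0 ≤ t i)
    (ht_top : Tendsto t atTop atTop)
    (hgap : ∀ i : ℕ, (volume (S ∩ Set.Icc (t i) (t (i + 1)))).toReal ≤ 2 * r)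
    (hy : ∀ i : ℕ, dist (y i) (γ (t i)) ≤ r) :
    ∃ η₀ : ℝ → ℝ, MonotoneOn η₀ (Set.Ici 0) ∧ (∀ s : ℝ, 0 ≤ s → 0 ≤ η₀ s) ∧
      Tendsto (fun s : ℝ => η₀ s / s) atTop (nhds 0) ∧
      ∀ i : ℕ, dist (y i) (y (i + 1)) ≤ η₀ (dist (y 0) (y (i + 1))) :=
  sublinear_consecutive_gaps_of_density_general γ r M S t y hγ hM hdensity ht_mono ht_nonneg ht_top
    hgap hy
end

section
/- Let (X,d) be a metric space, γ : [0,∞) → X a geodesic ray, r > 0, c > 0, and S ⊆ [0,∞) Lebesgue measurable with lim_{T→∞} vol(S∩[0,T])/T = M for some M > 0. Let (s_i)_{i∈ℕ} be a strictly increasing sequence of nonnegative reals tending to ∞ with vol(S∩[s_i, s_{i+1}]) ≤ c for all i, and let (y_i)_{i∈ℕ} be points of X with d(y_i, γ(s_i)) ≤ r for all i. Then for every ε > 0 there exists N ∈ ℕ such that for all i ≥ N and all j ≥ 1: c·j ≥ M·(d(y_i, y_{i+j}) − 2r) − 2ε·(d(y_0, y_{i+j}) + s_0 + 2r). -/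
open Filter MeasureTheory

/-- Let `(X,d)` be a metric space, `γ : [0,∞) → X` a geodesic ray,
`r > 0`, `c > 0`, `S ⊆ [0,∞)` Lebesgue measurable with density `M > 0`. Let `(s_i)` be
strictly increasing nonnegative reals tending to `∞` with `vol(S∩[s_i, s_{i+1}]) ≤ c`
for all `i`, and `(y_i)` points with `d(y_i, γ(s_i)) ≤ r`. Then for every `ε > 0` there
is `N` with `c·j ≥ M·(d(y_i, y_{i+j}) − 2r) − 2ε·(d(y_0, y_{i+j}) + s_0 + 2r)` for all
`i ≥ N` and `j ≥ 1`. -/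
theorem step_count_linear_lower_bound
    {X : Type*} [MetricSpace X] (γ : ℝ → X) (r c M : ℝ) (S : Set ℝ)
    (s : ℕ → ℝ) (y : ℕ → X)
    (hγ : ∀ a b : ℝ, 0 ≤ a → 0 ≤ b → dist (γ a) (γ b) = |a - b|)
    (hr : 0 < r) (hc : 0 < c)
    (hS_meas : MeasurableSet S) (hS_sub : S ⊆ Set.Ici 0)
    (hM : 0 < M)
    (hdensity : Tendsto (fun T : ℝ => (volume (S ∩ Set.Icc 0 T)).toReal / T)
      atTop (nhds M))
    (hs_mono : StrictMono s) (hs_nonneg : ∀ i, 0 ≤ s i)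
    (hs_top : Tendsto s atTop atTop)
    (hgap : ∀ i : ℕ, (volume (S ∩ Set.Icc (s i) (s (i + 1)))).toReal ≤ c)
    (hy : ∀ i : ℕ, dist (y i) (γ (s i)) ≤ r) :
    ∀ ε : ℝ, 0 < ε → ∃ N : ℕ, ∀ i : ℕ, N ≤ i → ∀ j : ℕ, 1 ≤ j →
      M * (dist (y i) (y (i + j)) - 2 * r)
        - 2 * ε * (dist (y 0) (y (i + j)) + s 0 + 2 * r) ≤ c * j := by
  intro ε hε
  -- finiteness of the measures involved
  have hfin : ∀ a b : ℝ, volume (S ∩ Set.Icc a b) ≠ ⊤ := by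
    intro a b
    refine ((measure_mono Set.inter_subset_right).trans_lt ?_).ne
    rw [Real.volume_Icc]
    exact ENNReal.ofReal_lt_top
  -- subadditivity
  have hsub : ∀ a b c' : ℝ, a ≤ b → b ≤ c' →
      (volume (S ∩ Set.Icc a c')).toReal ≤
        (volume (S ∩ Set.Icc a b)).toReal + (volume (S ∩ Set.Icc b c')).toReal := by
    intro a b c' hab hbc
    have hset : S ∩ Set.Icc a c' ⊆ (S ∩ Set.Icc a b) ∪ (S ∩ Set.Icc b c') := by
      rintro x ⟨hxS, hx1, hx2⟩
      rcases le_total x b with h | h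
      · exact Or.inl ⟨hxS, hx1, h⟩
      · exact Or.inr ⟨hxS, h, hx2⟩
    have hle : volume (S ∩ Set.Icc a c') ≤
        volume (S ∩ Set.Icc a b) + volume (S ∩ Set.Icc b c') :=
      (measure_mono hset).trans (measure_union_le _ _)
    have := ENNReal.toReal_mono (ENNReal.add_ne_top.2 ⟨hfin a b, hfin b c'⟩) hle
    rwa [ENNReal.toReal_add (hfin a b) (hfin b c')] at this
  -- cumulative gap bound
  have hgapj : ∀ i j : ℕ, (volume (S ∩ Set.Icc (s i) (s (i + j)))).toReal ≤ c * j := by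
    intro i j
    induction j with
    | zero =>
      have h0 : volume (S ∩ Set.Icc (s i) (s (i + 0))) = 0 :=
        measure_mono_null Set.inter_subset_right (by simp)
      rw [h0]
      simp
    | succ j ih =>
      have h1 := hsub (s i) (s (i + j)) (s (i + j + 1))
        (hs_mono.monotone (Nat.le_add_right _ _)) (hs_mono.monotone (Nat.le_succ _))
      have h2 := hgap (i + j)
      have : (volume (S ∩ Set.Icc (s i) (s (i + (j + 1))))).toReal ≤ c * j + c := by
        calc (volume (S ∩ Set.Icc (s i) (s (i + (j + 1))))).toReal
            ≤ (volume (S ∩ Set.Icc (s i) (s (i + j)))).toReal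
              + (volume (S ∩ Set.Icc (s (i + j)) (s (i + j + 1)))).toReal := h1
          _ ≤ c * j + c := add_le_add ih h2
      push_cast
      linarith
  -- density control
  obtain ⟨T0, hT0⟩ := Metric.tendsto_atTop.mp hdensity ε hε
  obtain ⟨N, hN⟩ := Filter.eventually_atTop.mp (tendsto_atTop.mp hs_top (max T0 1))
  refine ⟨N, fun i hi j hj => ?_⟩
  set a := s i with ha_def
  set b := s (i + j) with hb_def
  have hab : a ≤ b := hs_mono.monotone (Nat.le_add_right _ _)
  have haT : max T0 1 ≤ a := hN i hi
  have hbT : max T0 1 ≤ b := haT.trans hab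
  have ha0 : (0:ℝ) < a := lt_of_lt_of_le (by positivity) ((le_max_right T0 1).trans haT)
  have hb0 : (0:ℝ) < b := ha0.trans_le hab
  -- density bounds at a and b
  have hda := hT0 a ((le_max_left T0 1).trans haT)
  have hdb := hT0 b ((le_max_left T0 1).trans hbT)
  rw [Real.dist_eq, abs_lt] at hda hdb
  have hva : (volume (S ∩ Set.Icc 0 a)).toReal ≤ (M + ε) * a := by
    have h : (volume (S ∩ Set.Icc 0 a)).toReal / a < M + ε := by linarith [hda.2]
    calc (volume (S ∩ Set.Icc 0 a)).toReal
        = ((volume (S ∩ Set.Icc 0 a)).toReal / a) * a := by field_simp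
      _ ≤ (M + ε) * a := mul_le_mul_of_nonneg_right h.le ha0.le
  have hvb : (M - ε) * b ≤ (volume (S ∩ Set.Icc 0 b)).toReal := by
    have h := hdb.1
    have : (M - ε) < (volume (S ∩ Set.Icc 0 b)).toReal / b := by linarith
    calc (M - ε) * b ≤ ((volume (S ∩ Set.Icc 0 b)).toReal / b) * b :=
          mul_le_mul_of_nonneg_right this.le hb0.le
      _ = (volume (S ∩ Set.Icc 0 b)).toReal := by field_simp
  -- split [0,b] at a
  have hsplit := hsub 0 a b ha0.le hab
  have hcj := hgapj i j
  -- geometry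
  have hγab : dist (γ a) (γ b) = b - a := by
    rw [hγ a b ha0.le hb0.le, abs_sub_comm, abs_of_nonneg (by linarith)]
  have hd1 : dist (y i) (y (i + j)) ≤ r + (b - a) + r := by
    calc dist (y i) (y (i + j))
        ≤ dist (y i) (γ a) + dist (γ a) (γ b) + dist (γ b) (y (i + j)) :=
          dist_triangle4 _ _ _ _
      _ ≤ r + (b - a) + r := by
          rw [hγab, dist_comm (γ b)]
          exact add_le_add (add_le_add (hy i) le_rfl) (hy (i + j))
  have hs0b : s 0 ≤ b := hs_mono.monotone (Nat.zero_le _)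
  have hγ0b : dist (γ (s 0)) (γ b) = b - s 0 := by
    rw [hγ (s 0) b (hs_nonneg 0) hb0.le, abs_sub_comm, abs_of_nonneg (by linarith)]
  have hd2 : b - s 0 ≤ r + dist (y 0) (y (i + j)) + r := by
    calc b - s 0 = dist (γ (s 0)) (γ b) := hγ0b.symm
      _ ≤ dist (γ (s 0)) (y 0) + dist (y 0) (y (i + j)) + dist (y (i + j)) (γ b) :=
          dist_triangle4 _ _ _ _
      _ ≤ r + dist (y 0) (y (i + j)) + r := by
          rw [dist_comm (γ (s 0))]
          exact add_le_add (add_le_add (hy 0) le_rfl) (hy (i + j))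
  -- combine
  have key : (M - ε) * b - (M + ε) * a ≤ c * j := by
    have : (volume (S ∩ Set.Icc a b)).toReal ≤ c * j := hcj
    linarith
  have hD0 : (0:ℝ) ≤ dist (y 0) (y (i + j)) := dist_nonneg
  nlinarith [mul_le_mul_of_nonneg_left hd1 hM.le,
    mul_le_mul_of_nonneg_left hd2 (by linarith : (0:ℝ) ≤ 2 * ε),
    mul_le_mul_of_nonneg_left hab (by linarith : (0:ℝ) ≤ ε)]
end

section
/- Let (X,d) be a metric space, o ∈ X, let η : [0,∞) → [0,∞) be a nondecreasing sublinear function, and let d₁ > 0 be such that for all x, y ∈ X, d(x,y) ≤ η(d(x,o)) implies d₁·η(d(y,o)) ≤ η(d(x,o)). Let (x_n)_{n∈ℕ} be a sequence in X with d(x_n, x_{n+1}) ≤ η(d(x_n, o)) for all n, and let (n_i)_{i∈ℕ} be a strictly increasing sequence of indices with n_{i+1} − n_i ≤ F + 1 for all i, where F ∈ ℕ. Then d(x_{n_i}, x_{n_{i+1}}) ≤ (Σ_{k=0}^{F} d₁^{−k})·η(d(x_{n_i}, o)) for all i. -/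
open Filter

/-! The condition on `η` makes `η(d(x_k, o))` decay at least geometrically with ratio `d₁⁻¹`
along the sequence, so the `L ≤ F + 1` steps from `x_{n_i}` to `x_{n_{i+1}}` have lengths bounded
by `d₁⁻ʲ η(d(x_{n_i}, o))`, `j < L`; the triangle inequality sums them. -/

theorem dist_le_geom_sum_mul {X : Type*} [PseudoMetricSpace X] {y : ℕ → X} {r C : ℝ}
    (hr : 0 ≤ r) (hC : 0 ≤ C) {L M : ℕ} (hLM : L ≤ M)
    (hy : ∀ k < L, dist (y k) (y (k + 1)) ≤ r ^ k * C) :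
    dist (y 0) (y L) ≤ (∑ k ∈ Finset.range M, r ^ k) * C :=
  calc dist (y 0) (y L) ≤ ∑ k ∈ Finset.range L, r ^ k * C :=
        dist_le_range_sum_of_dist_le L (hy _)
    _ ≤ ∑ k ∈ Finset.range M, r ^ k * C :=
        Finset.sum_le_sum_of_subset_of_nonneg (Finset.range_subset_range.2 hLM)
          fun _ _ _ => by positivity
    _ = (∑ k ∈ Finset.range M, r ^ k) * C := (Finset.sum_mul ..).symm

theorem subsequence_preserves_sublinear_bound_general
    {X : Type*} [MetricSpace X] (o : X) (η : ℝ → ℝ) (d₁ : ℝ) (F : ℕ)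
    (x : ℕ → X) (n : ℕ → ℕ)
    (hη_nonneg : ∀ t : ℝ, 0 ≤ t → 0 ≤ η t)
    (hd₁ : 0 < d₁)
    (hcontract : ∀ p q : X, dist p q ≤ η (dist p o) →
      d₁ * η (dist q o) ≤ η (dist p o))
    (hx : ∀ k : ℕ, dist (x k) (x (k + 1)) ≤ η (dist (x k) o))
    (hn_mono : StrictMono n)
    (hn_gap : ∀ i : ℕ, n (i + 1) - n i ≤ F + 1) :
    ∀ i : ℕ, dist (x (n i)) (x (n (i + 1))) ≤
      (∑ k ∈ Finset.range (F + 1), (d₁⁻¹) ^ k) * η (dist (x (n i)) o) := by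
  intro i
  obtain ⟨L, hL⟩ := Nat.exists_eq_add_of_le (hn_mono (lt_add_one i)).le
  set y : ℕ → X := fun j => x (n i + j)
  have hdecay : ∀ j, η (dist (y j) o) ≤ d₁⁻¹ ^ j * η (dist (y 0) o) := fun j =>
    le_geom (u := fun j => η (dist (y j) o)) (inv_nonneg.2 hd₁.le) j fun k _ =>
      (le_inv_mul_iff₀ hd₁).2 (hcontract _ _ (hx (n i + k)))
  have hLF : L ≤ F + 1 := by have := hn_gap i; omega
  simpa [y, hL] using dist_le_geom_sum_mul (y := y) (inv_nonneg.2 hd₁.le)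
    (hη_nonneg _ dist_nonneg) hLF fun k _ => (hx (n i + k)).trans (hdecay k)

/-- Let `(X,d)` be a metric space, `o ∈ X`, `η : [0,∞) → [0,∞)`
nondecreasing sublinear, and `d₁ > 0` such that `d(x,y) ≤ η(d(x,o))` implies
`d₁·η(d(y,o)) ≤ η(d(x,o))`. Let `(x_n)` satisfy `d(x_n, x_{n+1}) ≤ η(d(x_n, o))` and
let `(n_i)` be strictly increasing with `n_{i+1} − n_i ≤ F + 1`. Then
`d(x_{n_i}, x_{n_{i+1}}) ≤ (Σ_{k=0}^{F} d₁^{−k})·η(d(x_{n_i}, o))` for all `i`. -/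
theorem subsequence_preserves_sublinear_bound
    {X : Type*} [MetricSpace X] (o : X) (η : ℝ → ℝ) (d₁ : ℝ) (F : ℕ)
    (x : ℕ → X) (n : ℕ → ℕ)
    (hη_mono : MonotoneOn η (Set.Ici 0))
    (hη_nonneg : ∀ t : ℝ, 0 ≤ t → 0 ≤ η t)
    (hη_sub : Tendsto (fun t : ℝ => η t / t) atTop (nhds 0))
    (hd₁ : 0 < d₁)
    (hcontract : ∀ p q : X, dist p q ≤ η (dist p o) →
      d₁ * η (dist q o) ≤ η (dist p o))
    (hx : ∀ k : ℕ, dist (x k) (x (k + 1)) ≤ η (dist (x k) o))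
    (hn_mono : StrictMono n)
    (hn_gap : ∀ i : ℕ, n (i + 1) - n i ≤ F + 1) :
    ∀ i : ℕ, dist (x (n i)) (x (n (i + 1))) ≤
      (∑ k ∈ Finset.range (F + 1), (d₁⁻¹) ^ k) * η (dist (x (n i)) o) :=
  subsequence_preserves_sublinear_bound_general o η d₁ F x n hη_nonneg hd₁ hcontract hx hn_mono
    hn_gap
end

section
/- Let (X,d) be a metric space, γ : [0,∞) → X a geodesic ray, r > 0, and C > 2r. Let (t_i)_{i∈ℕ} be a strictly increasing sequence of nonnegative reals and (y_i)_{i∈ℕ} points of X with d(y_i, γ(t_i)) ≤ r for all i, and suppose d(y_k, y_{k+1}) ≥ C for all k. Then for all i < j: d(y_i, y_j) ≥ (1 − 2r/C)·Σ_{k=i}^{j−1} d(y_k, y_{k+1}) − 2r. -/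
/-- Let `(X,d)` be a metric space, `γ : [0,∞) → X` a geodesic ray,
`r > 0`, `C > 2r`. Let `(t_i)` be strictly increasing nonnegative reals and `(y_i)`
points with `d(y_i, γ(t_i)) ≤ r` and `d(y_k, y_{k+1}) ≥ C` for all `k`. Then for all
`i < j`: `d(y_i, y_j) ≥ (1 − 2r/C)·Σ_{k=i}^{j−1} d(y_k, y_{k+1}) − 2r`. -/
theorem separated_points_near_ray_lower_bound
    {X : Type*} [MetricSpace X] (γ : ℝ → X) (r C : ℝ) (t : ℕ → ℝ) (y : ℕ → X)
    (hγ : ∀ a b : ℝ, 0 ≤ a → 0 ≤ b → dist (γ a) (γ b) = |a - b|)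
    (hr : 0 < r) (hC : 2 * r < C)
    (ht_mono : StrictMono t) (ht_nonneg : ∀ i, 0 ≤ t i)
    (hy : ∀ i : ℕ, dist (y i) (γ (t i)) ≤ r)
    (hsep : ∀ k : ℕ, C ≤ dist (y k) (y (k + 1))) :
    ∀ i j : ℕ, i < j →
      (1 - 2 * r / C) * (∑ k ∈ Finset.Ico i j, dist (y k) (y (k + 1))) - 2 * r ≤
        dist (y i) (y j) := by
  intro i j hij
  have hCpos : 0 < C := by linarith
  -- per-term bound
  have hterm : ∀ k : ℕ, (1 - 2 * r / C) * dist (y k) (y (k + 1)) ≤ t (k + 1) - t k := by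
    intro k
    have h1 : dist (y k) (y (k + 1)) ≤ (t (k + 1) - t k) + 2 * r := by
      have htri := dist_triangle4 (y k) (γ (t k)) (γ (t (k + 1))) (y (k + 1))
      have heq : dist (γ (t k)) (γ (t (k + 1))) = t (k + 1) - t k := by
        rw [hγ _ _ (ht_nonneg k) (ht_nonneg (k + 1)), abs_sub_comm,
          abs_of_nonneg (by linarith [ht_mono (Nat.lt_succ_self k)])]
      have h2 := hy k
      have h3 : dist (γ (t (k + 1))) (y (k + 1)) ≤ r := by
        rw [dist_comm]; exact hy (k + 1)
      linarith
    have h4 := hsep k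
    have h5 : 2 * r ≤ (2 * r / C) * dist (y k) (y (k + 1)) := by
      calc 2 * r = (2 * r / C) * C := by field_simp
        _ ≤ (2 * r / C) * dist (y k) (y (k + 1)) := by
            apply mul_le_mul_of_nonneg_left h4
            positivity
    nlinarith
  have hsum : (1 - 2 * r / C) * (∑ k ∈ Finset.Ico i j, dist (y k) (y (k + 1))) ≤
      t j - t i := by
    rw [Finset.mul_sum]
    have htel : ∑ k ∈ Finset.Ico i j, (t (k + 1) - t k) = t j - t i := by
      rw [Finset.sum_Ico_eq_sub _ hij.le, Finset.sum_range_sub, Finset.sum_range_sub]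
      ring
    rw [← htel]
    exact Finset.sum_le_sum fun k _ => hterm k
  have hfinal : t j - t i ≤ dist (y i) (y j) + 2 * r := by
    have htri := dist_triangle4 (γ (t i)) (y i) (y j) (γ (t j))
    have heq : dist (γ (t i)) (γ (t j)) = t j - t i := by
      rw [hγ _ _ (ht_nonneg i) (ht_nonneg j), abs_sub_comm,
        abs_of_nonneg (by linarith [ht_mono hij])]
    have h2 : dist (γ (t i)) (y i) ≤ r := by rw [dist_comm]; exact hy i
    have h3 := hy j
    linarith
  linarith
end
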